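/- On Minkowski ℝ⁴, let R be a smooth (0,4)-tensor field having Riemann symmetries at every point and satisfying the second Bianchi identity ∂_{[ν} R_{αβ]λμ} = 0 everywhere, and suppose the matter current J_{λμβ} = ∂_λ Ric_{μβ} − ∂_μ Ric_{λβ} vanishes identically, where Ric_{μβ} = η^{αλ} R_{αμλβ}. Then for any three Killing vector fields ξ₁, ξ₂, ξ₃ of η, the Bel current j_μ = B_{(αβλ)μ} ξ₁^α ξ₂^β ξ₃^λ built from the Bel tensor B of R is conserved: ∂^μ j_μ = 0 everywhere. -/

import Mathlib

noncomputable section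

/-- The `ν`-th coordinate vector of ℝ⁴. -/
def coordV (ν : Fin 4) : Fin 4 → ℝ := Pi.single ν 1

/-- The coordinate partial derivative `∂_ν f` at `p`. -/
def pd (ν : Fin 4) (f : (Fin 4 → ℝ) → ℝ) (p : Fin 4 → ℝ) : ℝ :=
  fderiv ℝ f p (coordV ν)

/-- The Minkowski metric `η = diag(1, −1, −1, −1)` on ℝ⁴ (its own inverse,
so it is also used to raise indices). -/
def mink (μ ν : Fin 4) : ℝ := if μ = ν then (if μ = 0 then 1 else -1) else 0

/-- A (0,4)-tensor (components) has the Riemann symmetries: antisymmetry in the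
first pair, antisymmetry in the second pair, symmetry under interchange of the
two pairs, and the first Bianchi identity `R_{α[βλμ]} = 0` (equivalent, given
the other symmetries, to the cyclic identity). -/
def RiemannSym (R : Fin 4 → Fin 4 → Fin 4 → Fin 4 → ℝ) : Prop :=
  (∀ α β lam μ, R α β lam μ = - R β α lam μ) ∧
  (∀ α β lam μ, R α β lam μ = - R α β μ lam) ∧
  (∀ α β lam μ, R α β lam μ = R lam μ α β) ∧
  (∀ α β lam μ, R α β lam μ + R α lam μ β + R α μ β lam = 0)

/-- The second Bianchi identity `∂_{[ν} R_{αβ]λμ} = 0` (antisymmetrization over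
the three indices `ν, α, β`) for a (0,4)-tensor field `R` on Minkowski ℝ⁴. -/
def SecondBianchi (R : (Fin 4 → ℝ) → Fin 4 → Fin 4 → Fin 4 → Fin 4 → ℝ) : Prop :=
  ∀ p ν α β lam μ,
    (1/6 : ℝ) *
      (pd ν (fun q => R q α β lam μ) p + pd α (fun q => R q β ν lam μ) p
        + pd β (fun q => R q ν α lam μ) p - pd ν (fun q => R q β α lam μ) p
        - pd α (fun q => R q ν β lam μ) p - pd β (fun q => R q α ν lam μ) p) = 0

/-- The (pointwise) Bel tensor of a (0,4)-tensor `R`, built with the Minkowski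
metric `η` (which is its own inverse, so indices are raised with `mink`):
`B_{αβλμ} = R_{αρλσ}R_β{}^ρ{}_μ{}^σ + R_{αρμσ}R_β{}^ρ{}_λ{}^σ
 − (1/2) η_{αβ} R_{ρτλσ}R^{ρτ}{}_μ{}^σ − (1/2) η_{λμ} R_{αρστ}R_β{}^{ρστ}
 + (1/8) η_{αβ} η_{λμ} R_{ρτσν}R^{ρτσν}`. -/
def Bel (R : Fin 4 → Fin 4 → Fin 4 → Fin 4 → ℝ) (α β lam μ : Fin 4) : ℝ :=
    (∑ ρ, ∑ σ, ∑ ρ', ∑ σ', R α ρ lam σ * mink ρ ρ' * mink σ σ' * R β ρ' μ σ')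
  + (∑ ρ, ∑ σ, ∑ ρ', ∑ σ', R α ρ μ σ * mink ρ ρ' * mink σ σ' * R β ρ' lam σ')
  - (1/2) * mink α β * (∑ ρ, ∑ τ, ∑ σ, ∑ ρ', ∑ τ', ∑ σ',
      mink ρ ρ' * mink τ τ' * mink σ σ' * R ρ τ lam σ * R ρ' τ' μ σ')
  - (1/2) * mink lam μ * (∑ ρ, ∑ σ, ∑ τ, ∑ ρ', ∑ σ', ∑ τ',
      mink ρ ρ' * mink σ σ' * mink τ τ' * R α ρ σ τ * R β ρ' σ' τ')
  + (1/8) * mink α β * mink lam μ * (∑ ρ, ∑ τ, ∑ σ, ∑ ν, ∑ ρ', ∑ τ', ∑ σ', ∑ ν',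
      mink ρ ρ' * mink τ τ' * mink σ σ' * mink ν ν' * R ρ τ σ ν * R ρ' τ' σ' ν')

/-- The Bel tensor of `R` with all four indices raised with `η`. -/
def belUp (R : (Fin 4 → ℝ) → Fin 4 → Fin 4 → Fin 4 → Fin 4 → ℝ)
    (q : Fin 4 → ℝ) (α β lam μ : Fin 4) : ℝ :=
  ∑ α', ∑ β', ∑ lam', ∑ μ',
    mink α α' * mink β β' * mink lam lam' * mink μ μ' * Bel (R q) α' β' lam' μ'

/-- The divergence `∂_α B^{αβλμ}` of the Bel tensor of `R`. -/
def divBel (R : (Fin 4 → ℝ) → Fin 4 → Fin 4 → Fin 4 → Fin 4 → ℝ)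
    (p : Fin 4 → ℝ) (β lam μ : Fin 4) : ℝ :=
  ∑ α, pd α (fun q => belUp R q α β lam μ) p

/-- The Ricci trace of `R`: `Ric_{μβ} = η^{αλ} R_{αμλβ}`. -/
def ricci (R : (Fin 4 → ℝ) → Fin 4 → Fin 4 → Fin 4 → Fin 4 → ℝ)
    (q : Fin 4 → ℝ) (μ β : Fin 4) : ℝ :=
  ∑ α, ∑ lam, mink α lam * R q α μ lam β

/-- The matter current `J_{λμβ} = ∂_λ Ric_{μβ} − ∂_μ Ric_{λβ}`. -/
def matJ (R : (Fin 4 → ℝ) → Fin 4 → Fin 4 → Fin 4 → Fin 4 → ℝ)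
    (p : Fin 4 → ℝ) (lam μ β : Fin 4) : ℝ :=
  pd lam (fun q => ricci R q μ β) p - pd μ (fun q => ricci R q lam β) p

/-- The index of `ξ` lowered with the Minkowski metric: `ξ_β = η_{βρ} ξ^ρ`. -/
def lowerIdx (ξ : (Fin 4 → ℝ) → Fin 4 → ℝ) (q : Fin 4 → ℝ) (β : Fin 4) : ℝ :=
  ∑ ρ, mink β ρ * ξ q ρ

/-- `ξ` is a Killing vector field of the Minkowski metric:
`∂_α ξ_β + ∂_β ξ_α = 0` everywhere. -/
def IsKilling (ξ : (Fin 4 → ℝ) → Fin 4 → ℝ) : Prop :=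
  ∀ p α β, pd α (fun q => lowerIdx ξ q β) p + pd β (fun q => lowerIdx ξ q α) p = 0

/-- The Bel current `j_μ = B_{(αβλ)μ} ξ₁^α ξ₂^β ξ₃^λ` built from the Bel tensor
of `R` (symmetrized over its first three indices) and three vector fields. -/
def belCurrent (R : (Fin 4 → ℝ) → Fin 4 → Fin 4 → Fin 4 → Fin 4 → ℝ)
    (ξ₁ ξ₂ ξ₃ : (Fin 4 → ℝ) → Fin 4 → ℝ) (q : Fin 4 → ℝ) (μ : Fin 4) : ℝ :=
  ∑ α, ∑ β, ∑ lam,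
    ((1/6 : ℝ) * ∑ σ : Equiv.Perm (Fin 3),
        Bel (R q) (![α, β, lam] (σ 0)) (![α, β, lam] (σ 1)) (![α, β, lam] (σ 2)) μ)
      * ξ₁ q α * ξ₂ q β * ξ₃ q lam


-- pd lemmas
lemma pd_add {f g : (Fin 4 → ℝ) → ℝ} {p : Fin 4 → ℝ} (hf : DifferentiableAt ℝ f p)
    (hg : DifferentiableAt ℝ g p) (ν : Fin 4) :
    pd ν (fun q => f q + g q) p = pd ν f p + pd ν g p := by
  unfold pd; rw [fderiv_fun_add hf hg]; simp

lemma pd_sub {f g : (Fin 4 → ℝ) → ℝ} {p : Fin 4 → ℝ} (hf : DifferentiableAt ℝ f p)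
    (hg : DifferentiableAt ℝ g p) (ν : Fin 4) :
    pd ν (fun q => f q - g q) p = pd ν f p - pd ν g p := by
  unfold pd; rw [fderiv_fun_sub hf hg]; simp

lemma pd_mul {f g : (Fin 4 → ℝ) → ℝ} {p : Fin 4 → ℝ} (hf : DifferentiableAt ℝ f p)
    (hg : DifferentiableAt ℝ g p) (ν : Fin 4) :
    pd ν (fun q => f q * g q) p = pd ν f p * g p + f p * pd ν g p := by
  unfold pd; rw [fderiv_fun_mul hf hg]; simp; ring

lemma pd_const_mul {f : (Fin 4 → ℝ) → ℝ} {p : Fin 4 → ℝ} (hf : DifferentiableAt ℝ f p)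
    (c : ℝ) (ν : Fin 4) :
    pd ν (fun q => c * f q) p = c * pd ν f p := by
  unfold pd; rw [fderiv_const_mul hf]; simp

lemma pd_sum {ι : Type*} (s : Finset ι) {f : ι → (Fin 4 → ℝ) → ℝ} {p : Fin 4 → ℝ}
    (hf : ∀ i ∈ s, DifferentiableAt ℝ (f i) p) (ν : Fin 4) :
    pd ν (fun q => ∑ i ∈ s, f i q) p = ∑ i ∈ s, pd ν (f i) p := by
  unfold pd; rw [fderiv_fun_sum hf]; simp

-- perm sum
lemma permSum_eq (g : Fin 4 → Fin 4 → Fin 4 → ℝ) (a b c : Fin 4) :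
    (∑ σ : Equiv.Perm (Fin 3), g (![a,b,c] (σ 0)) (![a,b,c] (σ 1)) (![a,b,c] (σ 2)))
      = g a b c + g a c b + g b a c + g b c a + g c a b + g c b a := by
  have huniv : (Finset.univ : Finset (Equiv.Perm (Fin 3))) =
      {1, Equiv.swap 0 1, Equiv.swap 0 2, Equiv.swap 1 2,
        Equiv.swap 0 1 * Equiv.swap 1 2, Equiv.swap 1 2 * Equiv.swap 0 1} := by decide
  rw [huniv]
  rw [Finset.sum_insert (by decide), Finset.sum_insert (by decide),
    Finset.sum_insert (by decide), Finset.sum_insert (by decide),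
    Finset.sum_insert (by decide), Finset.sum_singleton]
  norm_num [Equiv.swap_apply_def, Equiv.Perm.mul_apply, Fin.ext_iff]
  have h2 : ![a,b,c] 2 = c := rfl
  rw [h2]
  ring


lemma mink_symm (a b : Fin 4) : mink a b = mink b a := by
  unfold mink; by_cases h : a = b <;> simp [h, eq_comm]

lemma mink_contract (a : Fin 4) (f : Fin 4 → ℝ) :
    ∑ x, mink a x * f x = mink a a * f a := by
  rw [Finset.sum_eq_single a]
  · intro b _ hb; simp [mink, (Ne.symm hb : ¬ a = b)]
  · simp

lemma mink_sq (a : Fin 4) : mink a a * mink a a = 1 := by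
  unfold mink; fin_cases a <;> norm_num [Fin.ext_iff]

lemma mink_diag_contract (b : Fin 4) (F : Fin 4 → ℝ) :
    (∑ a, mink a a * (mink a b * F a)) = F b := by
  rw [Finset.sum_eq_single b]
  · have := mink_sq b; linear_combination F b * this
  · intro a _ ha; simp [mink, ha]
  · simp

lemma contract2 (x y : Fin 4) (F : Fin 4 → Fin 4 → ℝ) :
    (∑ a, ∑ b, mink x a * mink y b * F a b)
      = mink x x * mink y y * F x y := by
  rw [Finset.sum_eq_single x]
  · rw [Finset.sum_eq_single y]
    · intro b _ hb; simp [mink, (Ne.symm hb : ¬ y = b)]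
    · simp
  · intro a _ ha; simp [mink, (Ne.symm ha : ¬ x = a)]
  · simp

lemma contract3 (x y z : Fin 4) (F : Fin 4 → Fin 4 → Fin 4 → ℝ) :
    (∑ a, ∑ b, ∑ c, mink x a * mink y b * mink z c * F a b c)
      = mink x x * mink y y * mink z z * F x y z := by
  rw [Finset.sum_eq_single x]
  · rw [Finset.sum_eq_single y]
    · rw [Finset.sum_eq_single z]
      · intro c _ hc; simp [mink, (Ne.symm hc : ¬ z = c)]
      · simp
    · intro b _ hb; simp [mink, (Ne.symm hb : ¬ y = b)]
    · simp
  · intro a _ ha; simp [mink, (Ne.symm ha : ¬ x = a)]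
  · simp

lemma contract4 (x y z w : Fin 4) (F : Fin 4 → Fin 4 → Fin 4 → Fin 4 → ℝ) :
    (∑ a, ∑ b, ∑ c, ∑ e, mink x a * mink y b * mink z c * mink w e * F a b c e)
      = mink x x * mink y y * mink z z * mink w w * F x y z w := by
  rw [Finset.sum_eq_single x]
  · rw [Finset.sum_eq_single y]
    · rw [Finset.sum_eq_single z]
      · rw [Finset.sum_eq_single w]
        · intro e _ he; simp [mink, (Ne.symm he : ¬ w = e)]
        · simp
      · intro c _ hc; simp [mink, (Ne.symm hc : ¬ z = c)]
      · simp
    · intro b _ hb; simp [mink, (Ne.symm hb : ¬ y = b)]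
    · simp
  · intro a _ ha; simp [mink, (Ne.symm ha : ¬ x = a)]
  · simp

-- sum reordering helpers
lemma sum3_perm (G : Fin 4 → Fin 4 → Fin 4 → ℝ) :
    (∑ x, ∑ y, ∑ z, G x y z) = ∑ y, ∑ z, ∑ x, G x y z := by
  rw [Finset.sum_comm]
  exact Finset.sum_congr rfl fun y _ => Finset.sum_comm

lemma sum3_last (G : Fin 4 → Fin 4 → Fin 4 → ℝ) :
    (∑ x, ∑ y, ∑ z, G x y z) = ∑ z, ∑ x, ∑ y, G x y z := by
  rw [sum3_perm, sum3_perm]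

lemma sum4_last (G : Fin 4 → Fin 4 → Fin 4 → Fin 4 → ℝ) :
    (∑ x, ∑ y, ∑ z, ∑ w, G x y z w) = ∑ y, ∑ z, ∑ w, ∑ x, G x y z w := by
  rw [Finset.sum_comm]
  refine Finset.sum_congr rfl fun y _ => ?_
  rw [Finset.sum_comm]
  exact Finset.sum_congr rfl fun z _ => Finset.sum_comm

/-- Collapsed form of the Bel tensor (all metric contractions performed). -/
def B2 (r : Fin 4 → Fin 4 → Fin 4 → Fin 4 → ℝ) (a b c m : Fin 4) : ℝ :=
    (∑ ρ, ∑ σ, mink ρ ρ * mink σ σ * (r a ρ c σ * r b ρ m σ))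
  + (∑ ρ, ∑ σ, mink ρ ρ * mink σ σ * (r a ρ m σ * r b ρ c σ))
  - (1/2) * mink a b * (∑ ρ, ∑ τ, ∑ σ, mink ρ ρ * mink τ τ * mink σ σ *
      (r ρ τ c σ * r ρ τ m σ))
  - (1/2) * mink c m * (∑ ρ, ∑ σ, ∑ τ, mink ρ ρ * mink σ σ * mink τ τ *
      (r a ρ σ τ * r b ρ σ τ))
  + (1/8) * mink a b * mink c m * (∑ ρ, ∑ τ, ∑ σ, ∑ ι, mink ρ ρ * mink τ τ * mink σ σ *
      mink ι ι * (r ρ τ σ ι * r ρ τ σ ι))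

lemma Bel_eq_B2 (r : Fin 4 → Fin 4 → Fin 4 → Fin 4 → ℝ) (a b c m : Fin 4) :
    Bel r a b c m = B2 r a b c m := by
  unfold Bel B2
  have h1 : ∀ c' m' : Fin 4, (∑ ρ, ∑ σ, ∑ ρ', ∑ σ', r a ρ c' σ * mink ρ ρ' * mink σ σ' * r b ρ' m' σ')
      = ∑ ρ, ∑ σ, mink ρ ρ * mink σ σ * (r a ρ c' σ * r b ρ m' σ) := by
    intro c' m'
    refine Finset.sum_congr rfl fun ρ _ => Finset.sum_congr rfl fun σ _ => ?_
    have : (∑ ρ', ∑ σ', r a ρ c' σ * mink ρ ρ' * mink σ σ' * r b ρ' m' σ')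
        = ∑ ρ', ∑ σ', mink ρ ρ' * mink σ σ' * (r a ρ c' σ * r b ρ' m' σ') := by
      refine Finset.sum_congr rfl fun _ _ => Finset.sum_congr rfl fun _ _ => by ring
    rw [this, contract2]
  have h3 : (∑ ρ, ∑ τ, ∑ σ, ∑ ρ', ∑ τ', ∑ σ',
        mink ρ ρ' * mink τ τ' * mink σ σ' * r ρ τ c σ * r ρ' τ' m σ')
      = ∑ ρ, ∑ τ, ∑ σ, mink ρ ρ * mink τ τ * mink σ σ * (r ρ τ c σ * r ρ τ m σ) := by
    refine Finset.sum_congr rfl fun ρ _ => Finset.sum_congr rfl fun τ _ =>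
      Finset.sum_congr rfl fun σ _ => ?_
    have : (∑ ρ', ∑ τ', ∑ σ', mink ρ ρ' * mink τ τ' * mink σ σ' * r ρ τ c σ * r ρ' τ' m σ')
        = ∑ ρ', ∑ τ', ∑ σ', mink ρ ρ' * mink τ τ' * mink σ σ' * (r ρ τ c σ * r ρ' τ' m σ') := by
      refine Finset.sum_congr rfl fun _ _ => Finset.sum_congr rfl fun _ _ =>
        Finset.sum_congr rfl fun _ _ => by ring
    rw [this, contract3]
  have h4 : (∑ ρ, ∑ σ, ∑ τ, ∑ ρ', ∑ σ', ∑ τ',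
        mink ρ ρ' * mink σ σ' * mink τ τ' * r a ρ σ τ * r b ρ' σ' τ')
      = ∑ ρ, ∑ σ, ∑ τ, mink ρ ρ * mink σ σ * mink τ τ * (r a ρ σ τ * r b ρ σ τ) := by
    refine Finset.sum_congr rfl fun ρ _ => Finset.sum_congr rfl fun σ _ =>
      Finset.sum_congr rfl fun τ _ => ?_
    have : (∑ ρ', ∑ σ', ∑ τ', mink ρ ρ' * mink σ σ' * mink τ τ' * r a ρ σ τ * r b ρ' σ' τ')
        = ∑ ρ', ∑ σ', ∑ τ', mink ρ ρ' * mink σ σ' * mink τ τ' * (r a ρ σ τ * r b ρ' σ' τ') := by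
      refine Finset.sum_congr rfl fun _ _ => Finset.sum_congr rfl fun _ _ =>
        Finset.sum_congr rfl fun _ _ => by ring
    rw [this, contract3]
  have h5 : (∑ ρ, ∑ τ, ∑ σ, ∑ ν, ∑ ρ', ∑ τ', ∑ σ', ∑ ν',
        mink ρ ρ' * mink τ τ' * mink σ σ' * mink ν ν' * r ρ τ σ ν * r ρ' τ' σ' ν')
      = ∑ ρ, ∑ τ, ∑ σ, ∑ ι, mink ρ ρ * mink τ τ * mink σ σ * mink ι ι * (r ρ τ σ ι * r ρ τ σ ι) := by
    refine Finset.sum_congr rfl fun ρ _ => Finset.sum_congr rfl fun τ _ =>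
      Finset.sum_congr rfl fun σ _ => Finset.sum_congr rfl fun ν _ => ?_
    have : (∑ ρ', ∑ τ', ∑ σ', ∑ ν', mink ρ ρ' * mink τ τ' * mink σ σ' * mink ν ν' * r ρ τ σ ν * r ρ' τ' σ' ν')
        = ∑ ρ', ∑ τ', ∑ σ', ∑ ν', mink ρ ρ' * mink τ τ' * mink σ σ' * mink ν ν' * (r ρ τ σ ν * r ρ' τ' σ' ν') := by
      refine Finset.sum_congr rfl fun _ _ => Finset.sum_congr rfl fun _ _ =>
        Finset.sum_congr rfl fun _ _ => Finset.sum_congr rfl fun _ _ => by ring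
    rw [this, contract4]
  rw [h1, h1, h3, h4, h5]

lemma csum2 {f g : Fin 4 → Fin 4 → ℝ} (h : ∀ x y, f x y = g x y) :
    (∑ x, ∑ y, f x y) = ∑ x, ∑ y, g x y :=
  Finset.sum_congr rfl fun x _ => Finset.sum_congr rfl fun y _ => h x y

lemma csum3 {f g : Fin 4 → Fin 4 → Fin 4 → ℝ} (h : ∀ x y z, f x y z = g x y z) :
    (∑ x, ∑ y, ∑ z, f x y z) = ∑ x, ∑ y, ∑ z, g x y z :=
  Finset.sum_congr rfl fun x _ => Finset.sum_congr rfl fun y _ =>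
    Finset.sum_congr rfl fun z _ => h x y z

lemma csum4 {f g : Fin 4 → Fin 4 → Fin 4 → Fin 4 → ℝ} (h : ∀ x y z w, f x y z w = g x y z w) :
    (∑ x, ∑ y, ∑ z, ∑ w, f x y z w) = ∑ x, ∑ y, ∑ z, ∑ w, g x y z w :=
  Finset.sum_congr rfl fun x _ => Finset.sum_congr rfl fun y _ =>
    Finset.sum_congr rfl fun z _ => Finset.sum_congr rfl fun w _ => h x y z w

lemma B2_sym1 (r : Fin 4 → Fin 4 → Fin 4 → Fin 4 → ℝ) (a b c m : Fin 4) :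
    B2 r a b c m = B2 r b a c m := by
  unfold B2
  rw [mink_symm b a]
  rw [csum2 (f := fun ρ σ => mink ρ ρ * mink σ σ * (r b ρ c σ * r a ρ m σ))
    (g := fun ρ σ => mink ρ ρ * mink σ σ * (r a ρ m σ * r b ρ c σ)) (fun x y => by beta_reduce; ring)]
  rw [csum2 (f := fun ρ σ => mink ρ ρ * mink σ σ * (r b ρ m σ * r a ρ c σ))
    (g := fun ρ σ => mink ρ ρ * mink σ σ * (r a ρ c σ * r b ρ m σ)) (fun x y => by beta_reduce; ring)]
  rw [csum3 (f := fun ρ σ τ => mink ρ ρ * mink σ σ * mink τ τ * (r b ρ σ τ * r a ρ σ τ))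
    (g := fun ρ σ τ => mink ρ ρ * mink σ σ * mink τ τ * (r a ρ σ τ * r b ρ σ τ)) (fun x y z => by beta_reduce; ring)]
  ring

lemma B2_sym2 (r : Fin 4 → Fin 4 → Fin 4 → Fin 4 → ℝ) (a b c m : Fin 4) :
    B2 r a b c m = B2 r a b m c := by
  unfold B2
  rw [mink_symm m c]
  rw [csum3 (f := fun ρ τ σ => mink ρ ρ * mink τ τ * mink σ σ * (r ρ τ m σ * r ρ τ c σ))
    (g := fun ρ τ σ => mink ρ ρ * mink τ τ * mink σ σ * (r ρ τ c σ * r ρ τ m σ)) (fun x y z => by beta_reduce; ring)]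
  ring

lemma B2_sym3 (r : Fin 4 → Fin 4 → Fin 4 → Fin 4 → ℝ)
    (hr3 : ∀ a b c m, r a b c m = r c m a b) (a b c m : Fin 4) :
    B2 r a b c m = B2 r c m a b := by
  unfold B2
  have eA : ∀ a' b' c' m' : Fin 4, (∑ ρ, ∑ σ, mink ρ ρ * mink σ σ * (r c' ρ a' σ * r m' ρ b' σ))
      = ∑ ρ, ∑ σ, mink ρ ρ * mink σ σ * (r a' ρ c' σ * r b' ρ m' σ) := by
    intro a' b' c' m'
    rw [csum2 (g := fun ρ σ => mink σ σ * mink ρ ρ * (r a' σ c' ρ * r b' σ m' ρ))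
      (fun x y => by beta_reduce; rw [hr3 c' x a' y, hr3 m' x b' y]; ring)]
    exact Finset.sum_comm
  have eC1 : (∑ ρ, ∑ τ, ∑ σ, mink ρ ρ * mink τ τ * mink σ σ * (r ρ τ a σ * r ρ τ b σ))
      = ∑ ρ, ∑ σ, ∑ τ, mink ρ ρ * mink σ σ * mink τ τ * (r a ρ σ τ * r b ρ σ τ) := by
    rw [csum3 (g := fun ρ τ σ => mink σ σ * mink ρ ρ * mink τ τ * (r a σ ρ τ * r b σ ρ τ))
      (fun x y z => by beta_reduce; rw [hr3 x y a z, hr3 x y b z]; ring)]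
    exact (sum3_perm (fun x y z => mink x x * mink y y * mink z z * (r a x y z * r b x y z))).symm
  have eC2 : (∑ ρ, ∑ σ, ∑ τ, mink ρ ρ * mink σ σ * mink τ τ * (r c ρ σ τ * r m ρ σ τ))
      = ∑ ρ, ∑ τ, ∑ σ, mink ρ ρ * mink τ τ * mink σ σ * (r ρ τ c σ * r ρ τ m σ) := by
    rw [csum3 (g := fun ρ σ τ => mink σ σ * mink τ τ * mink ρ ρ * (r σ τ c ρ * r σ τ m ρ))
      (fun x y z => by beta_reduce; rw [hr3 c x y z, hr3 m x y z]; ring)]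
    exact (sum3_last (fun x y z => mink x x * mink y y * mink z z * (r x y c z * r x y m z))).symm
  have eC3 : (∑ ρ, ∑ τ, ∑ σ, ∑ ι, mink ρ ρ * mink τ τ * mink σ σ * mink ι ι * (r ρ τ σ ι * r ρ τ σ ι))
      = (∑ ρ, ∑ τ, ∑ σ, ∑ ι, mink ρ ρ * mink τ τ * mink σ σ * mink ι ι * (r ρ τ σ ι * r ρ τ σ ι)) := rfl
  rw [eA a b c m, eA b a c m, eC1, eC2]
  rw [csum2 (f := fun ρ σ => mink ρ ρ * mink σ σ * (r b ρ c σ * r a ρ m σ))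
    (g := fun ρ σ => mink ρ ρ * mink σ σ * (r a ρ m σ * r b ρ c σ)) (fun x y => by beta_reduce; ring)]
  ring

/-- Leibniz derivative of the collapsed Bel tensor. -/
def DB2 (r : Fin 4 → Fin 4 → Fin 4 → Fin 4 → ℝ)
    (d : Fin 4 → Fin 4 → Fin 4 → Fin 4 → Fin 4 → ℝ) (ν a b c m : Fin 4) : ℝ :=
    (∑ ρ, ∑ σ, mink ρ ρ * mink σ σ * (d ν a ρ c σ * r b ρ m σ + r a ρ c σ * d ν b ρ m σ))
  + (∑ ρ, ∑ σ, mink ρ ρ * mink σ σ * (d ν a ρ m σ * r b ρ c σ + r a ρ m σ * d ν b ρ c σ))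
  - (1/2) * mink a b * (∑ ρ, ∑ τ, ∑ σ, mink ρ ρ * mink τ τ * mink σ σ *
      (d ν ρ τ c σ * r ρ τ m σ + r ρ τ c σ * d ν ρ τ m σ))
  - (1/2) * mink c m * (∑ ρ, ∑ σ, ∑ τ, mink ρ ρ * mink σ σ * mink τ τ *
      (d ν a ρ σ τ * r b ρ σ τ + r a ρ σ τ * d ν b ρ σ τ))
  + (1/8) * mink a b * mink c m * (∑ ρ, ∑ τ, ∑ σ, ∑ ι, mink ρ ρ * mink τ τ * mink σ σ *
      mink ι ι * (d ν ρ τ σ ι * r ρ τ σ ι + r ρ τ σ ι * d ν ρ τ σ ι))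

lemma DB2_sym1 (r : Fin 4 → Fin 4 → Fin 4 → Fin 4 → ℝ)
    (d : Fin 4 → Fin 4 → Fin 4 → Fin 4 → Fin 4 → ℝ) (ν a b c m : Fin 4) :
    DB2 r d ν a b c m = DB2 r d ν b a c m := by
  unfold DB2
  rw [mink_symm b a]
  rw [csum2 (f := fun ρ σ => mink ρ ρ * mink σ σ * (d ν b ρ c σ * r a ρ m σ + r b ρ c σ * d ν a ρ m σ))
    (g := fun ρ σ => mink ρ ρ * mink σ σ * (d ν a ρ m σ * r b ρ c σ + r a ρ m σ * d ν b ρ c σ))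
    (fun x y => by beta_reduce; ring)]
  rw [csum2 (f := fun ρ σ => mink ρ ρ * mink σ σ * (d ν b ρ m σ * r a ρ c σ + r b ρ m σ * d ν a ρ c σ))
    (g := fun ρ σ => mink ρ ρ * mink σ σ * (d ν a ρ c σ * r b ρ m σ + r a ρ c σ * d ν b ρ m σ))
    (fun x y => by beta_reduce; ring)]
  rw [csum3 (f := fun ρ σ τ => mink ρ ρ * mink σ σ * mink τ τ * (d ν b ρ σ τ * r a ρ σ τ + r b ρ σ τ * d ν a ρ σ τ))
    (g := fun ρ σ τ => mink ρ ρ * mink σ σ * mink τ τ * (d ν a ρ σ τ * r b ρ σ τ + r a ρ σ τ * d ν b ρ σ τ))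
    (fun x y z => by beta_reduce; ring)]
  ring

lemma DB2_sym3 (r : Fin 4 → Fin 4 → Fin 4 → Fin 4 → ℝ)
    (d : Fin 4 → Fin 4 → Fin 4 → Fin 4 → Fin 4 → ℝ)
    (hr3 : ∀ a b c m, r a b c m = r c m a b)
    (hd3 : ∀ ν a b c m, d ν a b c m = d ν c m a b) (ν a b c m : Fin 4) :
    DB2 r d ν a b c m = DB2 r d ν c m a b := by
  unfold DB2
  have eA : ∀ a' b' c' m' : Fin 4,
      (∑ ρ, ∑ σ, mink ρ ρ * mink σ σ * (d ν c' ρ a' σ * r m' ρ b' σ + r c' ρ a' σ * d ν m' ρ b' σ))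
      = ∑ ρ, ∑ σ, mink ρ ρ * mink σ σ * (d ν a' ρ c' σ * r b' ρ m' σ + r a' ρ c' σ * d ν b' ρ m' σ) := by
    intro a' b' c' m'
    rw [csum2 (g := fun ρ σ => mink σ σ * mink ρ ρ *
        (d ν a' σ c' ρ * r b' σ m' ρ + r a' σ c' ρ * d ν b' σ m' ρ))
      (fun x y => by beta_reduce; rw [hd3 ν c' x a' y, hr3 m' x b' y, hr3 c' x a' y, hd3 ν m' x b' y]; ring)]
    exact Finset.sum_comm
  have eC1 : (∑ ρ, ∑ τ, ∑ σ, mink ρ ρ * mink τ τ * mink σ σ *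
        (d ν ρ τ a σ * r ρ τ b σ + r ρ τ a σ * d ν ρ τ b σ))
      = ∑ ρ, ∑ σ, ∑ τ, mink ρ ρ * mink σ σ * mink τ τ *
        (d ν a ρ σ τ * r b ρ σ τ + r a ρ σ τ * d ν b ρ σ τ) := by
    rw [csum3 (g := fun ρ τ σ => mink σ σ * mink ρ ρ * mink τ τ *
        (d ν a σ ρ τ * r b σ ρ τ + r a σ ρ τ * d ν b σ ρ τ))
      (fun x y z => by beta_reduce; rw [hd3 ν x y a z, hr3 x y b z, hr3 x y a z, hd3 ν x y b z]; ring)]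
    exact (sum3_perm (fun x y z => mink x x * mink y y * mink z z *
      (d ν a x y z * r b x y z + r a x y z * d ν b x y z))).symm
  have eC2 : (∑ ρ, ∑ σ, ∑ τ, mink ρ ρ * mink σ σ * mink τ τ *
        (d ν c ρ σ τ * r m ρ σ τ + r c ρ σ τ * d ν m ρ σ τ))
      = ∑ ρ, ∑ τ, ∑ σ, mink ρ ρ * mink τ τ * mink σ σ *
        (d ν ρ τ c σ * r ρ τ m σ + r ρ τ c σ * d ν ρ τ m σ) := by
    rw [csum3 (g := fun ρ σ τ => mink σ σ * mink τ τ * mink ρ ρ *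
        (d ν σ τ c ρ * r σ τ m ρ + r σ τ c ρ * d ν σ τ m ρ))
      (fun x y z => by beta_reduce; rw [hd3 ν c x y z, hr3 m x y z, hr3 c x y z, hd3 ν m x y z]; ring)]
    exact (sum3_last (fun x y z => mink x x * mink y y * mink z z *
      (d ν x y c z * r x y m z + r x y c z * d ν x y m z))).symm
  rw [eA a b c m, eA b a c m, eC1, eC2]
  rw [csum2 (f := fun ρ σ => mink ρ ρ * mink σ σ * (d ν b ρ c σ * r a ρ m σ + r b ρ c σ * d ν a ρ m σ))
    (g := fun ρ σ => mink ρ ρ * mink σ σ * (d ν a ρ m σ * r b ρ c σ + r a ρ m σ * d ν b ρ c σ))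
    (fun x y => by beta_reduce; ring)]
  ring

lemma B2_rev (r : Fin 4 → Fin 4 → Fin 4 → Fin 4 → ℝ)
    (hr3 : ∀ a b c m, r a b c m = r c m a b) (a b c m : Fin 4) :
    B2 r m c b a = B2 r a b c m := by
  rw [B2_sym3 r hr3 m c b a, B2_sym1 r b a m c, B2_sym2 r a b m c]

/-- symmetrization of B2 over its first three slots -/
def SS (r : Fin 4 → Fin 4 → Fin 4 → Fin 4 → ℝ) (a b c m : Fin 4) : ℝ :=
  (1/6) * (B2 r a b c m + B2 r a c b m + B2 r b a c m + B2 r b c a m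
    + B2 r c a b m + B2 r c b a m)

lemma SS_eq3 (r : Fin 4 → Fin 4 → Fin 4 → Fin 4 → ℝ) (a b c m : Fin 4) :
    SS r a b c m = (1/3) * (B2 r a b c m + B2 r b c a m + B2 r c a b m) := by
  unfold SS
  rw [B2_sym1 r a c b m, B2_sym1 r b a c m, B2_sym1 r c b a m]
  ring

lemma SS_am (r : Fin 4 → Fin 4 → Fin 4 → Fin 4 → ℝ)
    (hr3 : ∀ a b c m, r a b c m = r c m a b) (a b c m : Fin 4) :
    SS r a b c m = SS r m b c a := by
  rw [SS_eq3, SS_eq3]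
  rw [B2_sym3 r hr3 m b c a, B2_sym2 r c a m b]
  rw [B2_rev r hr3 a m c b, B2_sym3 r hr3 a m c b, B2_sym1 r c b a m]
  rw [B2_rev r hr3 a b m c, B2_sym2 r a b m c]
  ring

lemma SS_bm (r : Fin 4 → Fin 4 → Fin 4 → Fin 4 → ℝ)
    (hr3 : ∀ a b c m, r a b c m = r c m a b) (a b c m : Fin 4) :
    SS r a b c m = SS r a m c b := by
  rw [SS_eq3, SS_eq3]
  rw [B2_sym3 r hr3 a m c b, B2_sym1 r c b a m]
  rw [B2_rev r hr3 b a c m, B2_sym1 r b a c m]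
  rw [B2_sym2 r c a m b]
  ring

lemma SS_cm (r : Fin 4 → Fin 4 → Fin 4 → Fin 4 → ℝ)
    (hr3 : ∀ a b c m, r a b c m = r c m a b) (a b c m : Fin 4) :
    SS r a b c m = SS r a b m c := by
  rw [SS_eq3, SS_eq3]
  rw [B2_sym2 r a b m c]
  rw [B2_rev r hr3 c a m b, B2_sym2 r c a m b]
  rw [B2_sym3 r hr3 m a b c, B2_sym2 r b c m a]
  ring

lemma SS_ab (r : Fin 4 → Fin 4 → Fin 4 → Fin 4 → ℝ) (a b c m : Fin 4) :
    SS r a b c m = SS r b a c m := by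
  unfold SS; ring

lemma SS_bc (r : Fin 4 → Fin 4 → Fin 4 → Fin 4 → ℝ) (a b c m : Fin 4) :
    SS r a b c m = SS r a c b m := by
  unfold SS; ring

lemma sum_add2 (F G : Fin 4 → Fin 4 → ℝ) :
    (∑ x, ∑ y, (F x y + G x y)) = (∑ x, ∑ y, F x y) + (∑ x, ∑ y, G x y) := by
  simp [Finset.sum_add_distrib]

lemma sum_add3 (F G : Fin 4 → Fin 4 → Fin 4 → ℝ) :
    (∑ x, ∑ y, ∑ z, (F x y z + G x y z))
      = (∑ x, ∑ y, ∑ z, F x y z) + (∑ x, ∑ y, ∑ z, G x y z) := by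
  simp [Finset.sum_add_distrib]

lemma sum_add4 (F G : Fin 4 → Fin 4 → Fin 4 → Fin 4 → ℝ) :
    (∑ x, ∑ y, ∑ z, ∑ w, (F x y z w + G x y z w))
      = (∑ x, ∑ y, ∑ z, ∑ w, F x y z w) + (∑ x, ∑ y, ∑ z, ∑ w, G x y z w) := by
  simp [Finset.sum_add_distrib]

lemma push_split2 (C : ℝ) (W F G : Fin 4 → Fin 4 → ℝ) :
    C * (∑ x, ∑ y, W x y * (F x y + G x y))
      = (∑ x, ∑ y, C * (W x y * F x y)) + (∑ x, ∑ y, C * (W x y * G x y)) := by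
  simp only [Finset.mul_sum]
  rw [csum2 (f := fun x y => C * (W x y * (F x y + G x y)))
    (g := fun x y => C * (W x y * F x y) + C * (W x y * G x y)) (fun x y => by ring)]
  exact sum_add2 _ _

lemma push_split3 (C : ℝ) (W F G : Fin 4 → Fin 4 → Fin 4 → ℝ) :
    C * (∑ x, ∑ y, ∑ z, W x y z * (F x y z + G x y z))
      = (∑ x, ∑ y, ∑ z, C * (W x y z * F x y z))
        + (∑ x, ∑ y, ∑ z, C * (W x y z * G x y z)) := by
  simp only [Finset.mul_sum]
  rw [csum3 (f := fun x y z => C * (W x y z * (F x y z + G x y z)))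
    (g := fun x y z => C * (W x y z * F x y z) + C * (W x y z * G x y z)) (fun x y z => by ring)]
  exact sum_add3 _ _

section Div
variable {r : Fin 4 → Fin 4 → Fin 4 → Fin 4 → ℝ}
variable {d : Fin 4 → Fin 4 → Fin 4 → Fin 4 → Fin 4 → ℝ}

/-- contracted second Bianchi + vanishing matter current:
divergence of `R` on its third slot vanishes. -/
lemma dL1 (hd1 : ∀ ν a b c m, d ν a b c m = - d ν b a c m)
    (hBi : ∀ ν a b c m, d ν a b c m + d a b ν c m + d b ν a c m = 0)
    (hJ : ∀ l m b, (∑ x, mink x x * (d l x m x b - d m x l x b)) = 0)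
    (a b m : Fin 4) : (∑ x, mink x x * d x a b x m) = 0 := by
  have h1 : (∑ x, mink x x * d x a b x m)
      = ∑ x, mink x x * (d a x b x m - d b x a x m) := by
    refine Finset.sum_congr rfl fun x _ => ?_
    linear_combination mink x x * (hBi x a b x m) - mink x x * (hd1 a b x x m)
  rw [h1]; exact hJ a b m

/-- divergence on the first slot vanishes. -/
lemma dDivA (hd1 : ∀ ν a b c m, d ν a b c m = - d ν b a c m)
    (hd3 : ∀ ν a b c m, d ν a b c m = d ν c m a b)
    (hBi : ∀ ν a b c m, d ν a b c m + d a b ν c m + d b ν a c m = 0)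
    (hJ : ∀ l m b, (∑ x, mink x x * (d l x m x b - d m x l x b)) = 0)
    (y z w : Fin 4) : (∑ x, mink x x * d x x y z w) = 0 := by
  have h1 : (∑ x, mink x x * d x x y z w) = ∑ x, mink x x * d x z w x y := by
    refine Finset.sum_congr rfl fun x _ => ?_
    rw [hd3 x x y z w]
  rw [h1]; exact dL1 hd1 hBi hJ z w y

/-- Bianchi halving lemma, 3 summation indices. -/
lemma half3 (hr1 : ∀ a b c m, r a b c m = - r b a c m)
    (hd1 : ∀ ν a b c m, d ν a b c m = - d ν b a c m)
    (hBi : ∀ ν a b c m, d ν a b c m + d a b ν c m + d b ν a c m = 0)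
    (b c m : Fin 4) :
    (∑ a, ∑ ρ, ∑ σ, mink a a * (mink ρ ρ * mink σ σ * (r a ρ c σ * d a b ρ m σ)))
      = (1/2) * ∑ a, ∑ ρ, ∑ σ, mink a a * (mink ρ ρ * mink σ σ * (r a ρ c σ * d b a ρ m σ)) := by
  set X := ∑ a, ∑ ρ, ∑ σ, mink a a * (mink ρ ρ * mink σ σ * (r a ρ c σ * d a b ρ m σ)) with hXdef
  set Y := ∑ a, ∑ ρ, ∑ σ, mink a a * (mink ρ ρ * mink σ σ * (r a ρ c σ * d b ρ a m σ)) with hYdef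
  set Z := ∑ a, ∑ ρ, ∑ σ, mink a a * (mink ρ ρ * mink σ σ * (r a ρ c σ * d ρ a b m σ)) with hZdef
  set W := ∑ a, ∑ ρ, ∑ σ, mink a a * (mink ρ ρ * mink σ σ * (r a ρ c σ * d b a ρ m σ)) with hWdef
  have hXYZ : X + Y + Z = 0 := by
    rw [hXdef, hYdef, hZdef, ← sum_add3, ← sum_add3]
    refine Finset.sum_eq_zero fun a _ => Finset.sum_eq_zero fun ρ _ =>
      Finset.sum_eq_zero fun σ _ => ?_
    linear_combination (mink a a * (mink ρ ρ * mink σ σ * r a ρ c σ)) * (hBi a b ρ m σ)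
  have hZX : Z = X := by
    rw [hZdef]
    have hswap : (∑ a, ∑ ρ, ∑ σ, mink a a * (mink ρ ρ * mink σ σ * (r a ρ c σ * d ρ a b m σ)))
        = ∑ x, ∑ y, ∑ σ, mink y y * (mink x x * mink σ σ * (r y x c σ * d x y b m σ)) :=
      Finset.sum_comm
    rw [hswap, hXdef]
    refine csum3 fun x y σ => ?_
    rw [hr1 y x c σ, hd1 x y b m σ]; ring
  have hYW : Y + W = 0 := by
    rw [hYdef, hWdef, ← sum_add3]
    refine Finset.sum_eq_zero fun a _ => Finset.sum_eq_zero fun ρ _ =>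
      Finset.sum_eq_zero fun σ _ => ?_
    linear_combination (mink a a * (mink ρ ρ * mink σ σ * r a ρ c σ)) * (hd1 b ρ a m σ)
  linarith

/-- Bianchi halving lemma, 4 summation indices. -/
lemma half4 (hr1 : ∀ a b c m, r a b c m = - r b a c m)
    (hd1 : ∀ ν a b c m, d ν a b c m = - d ν b a c m)
    (hBi : ∀ ν a b c m, d ν a b c m + d a b ν c m + d b ν a c m = 0)
    (b : Fin 4) :
    (∑ a, ∑ ρ, ∑ σ, ∑ τ, mink a a * (mink ρ ρ * mink σ σ * mink τ τ * (r a ρ σ τ * d a b ρ σ τ)))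
      = (1/2) * ∑ a, ∑ ρ, ∑ σ, ∑ τ, mink a a * (mink ρ ρ * mink σ σ * mink τ τ * (r a ρ σ τ * d b a ρ σ τ)) := by
  set X := ∑ a, ∑ ρ, ∑ σ, ∑ τ, mink a a * (mink ρ ρ * mink σ σ * mink τ τ * (r a ρ σ τ * d a b ρ σ τ)) with hXdef
  set Y := ∑ a, ∑ ρ, ∑ σ, ∑ τ, mink a a * (mink ρ ρ * mink σ σ * mink τ τ * (r a ρ σ τ * d b ρ a σ τ)) with hYdef
  set Z := ∑ a, ∑ ρ, ∑ σ, ∑ τ, mink a a * (mink ρ ρ * mink σ σ * mink τ τ * (r a ρ σ τ * d ρ a b σ τ)) with hZdef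
  set W := ∑ a, ∑ ρ, ∑ σ, ∑ τ, mink a a * (mink ρ ρ * mink σ σ * mink τ τ * (r a ρ σ τ * d b a ρ σ τ)) with hWdef
  have hXYZ : X + Y + Z = 0 := by
    rw [hXdef, hYdef, hZdef, ← sum_add4, ← sum_add4]
    refine Finset.sum_eq_zero fun a _ => Finset.sum_eq_zero fun ρ _ =>
      Finset.sum_eq_zero fun σ _ => Finset.sum_eq_zero fun τ _ => ?_
    linear_combination (mink a a * (mink ρ ρ * mink σ σ * mink τ τ * r a ρ σ τ)) * (hBi a b ρ σ τ)
  have hZX : Z = X := by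
    rw [hZdef]
    have hswap : (∑ a, ∑ ρ, ∑ σ, ∑ τ, mink a a * (mink ρ ρ * mink σ σ * mink τ τ * (r a ρ σ τ * d ρ a b σ τ)))
        = ∑ x, ∑ y, ∑ σ, ∑ τ, mink y y * (mink x x * mink σ σ * mink τ τ * (r y x σ τ * d x y b σ τ)) :=
      Finset.sum_comm
    rw [hswap, hXdef]
    refine csum4 fun x y σ τ => ?_
    rw [hr1 y x σ τ, hd1 x y b σ τ]; ring
  have hYW : Y + W = 0 := by
    rw [hYdef, hWdef, ← sum_add4]
    refine Finset.sum_eq_zero fun a _ => Finset.sum_eq_zero fun ρ _ =>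
      Finset.sum_eq_zero fun σ _ => Finset.sum_eq_zero fun τ _ => ?_
    linear_combination (mink a a * (mink ρ ρ * mink σ σ * mink τ τ * r a ρ σ τ)) * (hd1 b ρ a σ τ)
  linarith

end Div

section Div2
variable {r : Fin 4 → Fin 4 → Fin 4 → Fin 4 → ℝ}
variable {d : Fin 4 → Fin 4 → Fin 4 → Fin 4 → Fin 4 → ℝ}

lemma sum_split3 (W F G : Fin 4 → Fin 4 → Fin 4 → ℝ) :
    (∑ x, ∑ y, ∑ z, W x y z * (F x y z + G x y z))
      = (∑ x, ∑ y, ∑ z, W x y z * F x y z) + (∑ x, ∑ y, ∑ z, W x y z * G x y z) := by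
  rw [csum3 (f := fun x y z => W x y z * (F x y z + G x y z))
    (g := fun x y z => W x y z * F x y z + W x y z * G x y z) (fun x y z => by ring)]
  exact sum_add3 _ _

lemma sum_split4 (W F G : Fin 4 → Fin 4 → Fin 4 → Fin 4 → ℝ) :
    (∑ x, ∑ y, ∑ z, ∑ w, W x y z w * (F x y z w + G x y z w))
      = (∑ x, ∑ y, ∑ z, ∑ w, W x y z w * F x y z w)
        + (∑ x, ∑ y, ∑ z, ∑ w, W x y z w * G x y z w) := by
  rw [csum4 (f := fun x y z w => W x y z w * (F x y z w + G x y z w))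
    (g := fun x y z w => W x y z w * F x y z w + W x y z w * G x y z w) (fun x y z w => by ring)]
  exact sum_add4 _ _

lemma zap3 (hd1 : ∀ ν a b c m, d ν a b c m = - d ν b a c m)
    (hd3 : ∀ ν a b c m, d ν a b c m = d ν c m a b)
    (hBi : ∀ ν a b c m, d ν a b c m + d a b ν c m + d b ν a c m = 0)
    (hJ : ∀ l m b, (∑ x, mink x x * (d l x m x b - d m x l x b)) = 0)
    (b c m : Fin 4) :
    (∑ a, ∑ ρ, ∑ σ, mink a a * (mink ρ ρ * mink σ σ * (d a a ρ c σ * r b ρ m σ))) = 0 := by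
  rw [sum3_perm]
  refine Finset.sum_eq_zero fun ρ _ => Finset.sum_eq_zero fun σ _ => ?_
  have h : (∑ a, mink a a * (mink ρ ρ * mink σ σ * (d a a ρ c σ * r b ρ m σ)))
      = (∑ a, mink a a * d a a ρ c σ) * (mink ρ ρ * mink σ σ * r b ρ m σ) := by
    rw [Finset.sum_mul]
    exact Finset.sum_congr rfl fun a _ => by ring
  rw [h, dDivA hd1 hd3 hBi hJ ρ c σ, zero_mul]

lemma zap4 (hd1 : ∀ ν a b c m, d ν a b c m = - d ν b a c m)
    (hd3 : ∀ ν a b c m, d ν a b c m = d ν c m a b)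
    (hBi : ∀ ν a b c m, d ν a b c m + d a b ν c m + d b ν a c m = 0)
    (hJ : ∀ l m b, (∑ x, mink x x * (d l x m x b - d m x l x b)) = 0)
    (b : Fin 4) :
    (∑ a, ∑ ρ, ∑ σ, ∑ τ, mink a a * (mink ρ ρ * mink σ σ * mink τ τ * (d a a ρ σ τ * r b ρ σ τ))) = 0 := by
  rw [sum4_last]
  refine Finset.sum_eq_zero fun ρ _ => Finset.sum_eq_zero fun σ _ =>
    Finset.sum_eq_zero fun τ _ => ?_
  have h : (∑ a, mink a a * (mink ρ ρ * mink σ σ * mink τ τ * (d a a ρ σ τ * r b ρ σ τ)))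
      = (∑ a, mink a a * d a a ρ σ τ) * (mink ρ ρ * mink σ σ * mink τ τ * r b ρ σ τ) := by
    rw [Finset.sum_mul]
    exact Finset.sum_congr rfl fun a _ => by ring
  rw [h, dDivA hd1 hd3 hBi hJ ρ σ τ, zero_mul]

/-- Divergence of DB2 on the first (= derivative) slot vanishes. -/
lemma div1 (hr1 : ∀ a b c m, r a b c m = - r b a c m)
    (hd1 : ∀ ν a b c m, d ν a b c m = - d ν b a c m)
    (hd3 : ∀ ν a b c m, d ν a b c m = d ν c m a b)
    (hBi : ∀ ν a b c m, d ν a b c m + d a b ν c m + d b ν a c m = 0)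
    (hJ : ∀ l m b, (∑ x, mink x x * (d l x m x b - d m x l x b)) = 0)
    (b c m : Fin 4) :
    (∑ a, mink a a * DB2 r d a a b c m) = 0 := by
  have key : ∀ a : Fin 4, mink a a * DB2 r d a a b c m
      = (∑ ρ, ∑ σ, mink a a * (mink ρ ρ * mink σ σ * (d a a ρ c σ * r b ρ m σ)))
        + (∑ ρ, ∑ σ, mink a a * (mink ρ ρ * mink σ σ * (r a ρ c σ * d a b ρ m σ)))
        + (∑ ρ, ∑ σ, mink a a * (mink ρ ρ * mink σ σ * (d a a ρ m σ * r b ρ c σ)))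
        + (∑ ρ, ∑ σ, mink a a * (mink ρ ρ * mink σ σ * (r a ρ m σ * d a b ρ c σ)))
        + (-(1/2)) * (mink a a * (mink a b * (∑ ρ, ∑ τ, ∑ σ, mink ρ ρ * mink τ τ * mink σ σ *
            (d a ρ τ c σ * r ρ τ m σ + r ρ τ c σ * d a ρ τ m σ))))
        + (-(1/2) * mink c m) * ((∑ ρ, ∑ σ, ∑ τ, mink a a * (mink ρ ρ * mink σ σ * mink τ τ * (d a a ρ σ τ * r b ρ σ τ)))
          + (∑ ρ, ∑ σ, ∑ τ, mink a a * (mink ρ ρ * mink σ σ * mink τ τ * (r a ρ σ τ * d a b ρ σ τ))))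
        + ((1/8) * mink c m) * (mink a a * (mink a b * (∑ ρ, ∑ τ, ∑ σ, ∑ ι, mink ρ ρ * mink τ τ * mink σ σ *
            mink ι ι * (d a ρ τ σ ι * r ρ τ σ ι + r ρ τ σ ι * d a ρ τ σ ι)))) := by
    intro a
    unfold DB2
    linear_combination (push_split2 (mink a a) (fun ρ σ => mink ρ ρ * mink σ σ)
        (fun ρ σ => d a a ρ c σ * r b ρ m σ) (fun ρ σ => r a ρ c σ * d a b ρ m σ))
      + (push_split2 (mink a a) (fun ρ σ => mink ρ ρ * mink σ σ)
        (fun ρ σ => d a a ρ m σ * r b ρ c σ) (fun ρ σ => r a ρ m σ * d a b ρ c σ))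
      - ((1/2) * mink c m) * (push_split3 (mink a a) (fun ρ σ τ => mink ρ ρ * mink σ σ * mink τ τ)
        (fun ρ σ τ => d a a ρ σ τ * r b ρ σ τ) (fun ρ σ τ => r a ρ σ τ * d a b ρ σ τ))
  rw [Finset.sum_congr rfl (fun a _ => key a)]
  rw [Finset.sum_add_distrib, Finset.sum_add_distrib, Finset.sum_add_distrib,
    Finset.sum_add_distrib, Finset.sum_add_distrib, Finset.sum_add_distrib]
  rw [zap3 hd1 hd3 hBi hJ b c m, zap3 hd1 hd3 hBi hJ b m c]
  rw [half3 hr1 hd1 hBi b c m, half3 hr1 hd1 hBi b m c]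
  rw [(Finset.mul_sum Finset.univ (fun a => mink a a * (mink a b * (∑ ρ, ∑ τ, ∑ σ, mink ρ ρ * mink τ τ * mink σ σ *
      (d a ρ τ c σ * r ρ τ m σ + r ρ τ c σ * d a ρ τ m σ)))) (-(1/2))).symm]
  rw [mink_diag_contract b (fun a => (∑ ρ, ∑ τ, ∑ σ, mink ρ ρ * mink τ τ * mink σ σ *
      (d a ρ τ c σ * r ρ τ m σ + r ρ τ c σ * d a ρ τ m σ)))]
  rw [(Finset.mul_sum Finset.univ (fun a =>
      (∑ ρ, ∑ σ, ∑ τ, mink a a * (mink ρ ρ * mink σ σ * mink τ τ * (d a a ρ σ τ * r b ρ σ τ)))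
      + (∑ ρ, ∑ σ, ∑ τ, mink a a * (mink ρ ρ * mink σ σ * mink τ τ * (r a ρ σ τ * d a b ρ σ τ))))
      (-(1/2) * mink c m)).symm]
  rw [Finset.sum_add_distrib]
  rw [zap4 hd1 hd3 hBi hJ b, half4 hr1 hd1 hBi b]
  rw [(Finset.mul_sum Finset.univ (fun a => mink a a * (mink a b * (∑ ρ, ∑ τ, ∑ σ, ∑ ι, mink ρ ρ * mink τ τ * mink σ σ *
      mink ι ι * (d a ρ τ σ ι * r ρ τ σ ι + r ρ τ σ ι * d a ρ τ σ ι)))) ((1/8) * mink c m)).symm]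
  rw [mink_diag_contract b (fun a => (∑ ρ, ∑ τ, ∑ σ, ∑ ι, mink ρ ρ * mink τ τ * mink σ σ *
      mink ι ι * (d a ρ τ σ ι * r ρ τ σ ι + r ρ τ σ ι * d a ρ τ σ ι)))]
  rw [sum_split3 (fun ρ τ σ => mink ρ ρ * mink τ τ * mink σ σ)
    (fun ρ τ σ => d b ρ τ c σ * r ρ τ m σ) (fun ρ τ σ => r ρ τ c σ * d b ρ τ m σ)]
  rw [sum_split4 (fun ρ τ σ ι => mink ρ ρ * mink τ τ * mink σ σ * mink ι ι)
    (fun ρ τ σ ι => d b ρ τ σ ι * r ρ τ σ ι) (fun ρ τ σ ι => r ρ τ σ ι * d b ρ τ σ ι)]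
  have hA : (∑ a, ∑ ρ, ∑ σ, mink a a * (mink ρ ρ * mink σ σ * (r a ρ c σ * d b a ρ m σ)))
      = ∑ ρ, ∑ τ, ∑ σ, mink ρ ρ * mink τ τ * mink σ σ * (r ρ τ c σ * d b ρ τ m σ) :=
    csum3 fun x y z => by ring
  have hB : (∑ a, ∑ ρ, ∑ σ, mink a a * (mink ρ ρ * mink σ σ * (r a ρ m σ * d b a ρ c σ)))
      = ∑ ρ, ∑ τ, ∑ σ, mink ρ ρ * mink τ τ * mink σ σ * (d b ρ τ c σ * r ρ τ m σ) :=
    csum3 fun x y z => by ring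
  have hC : (∑ a, ∑ ρ, ∑ σ, ∑ τ, mink a a * (mink ρ ρ * mink σ σ * mink τ τ * (r a ρ σ τ * d b a ρ σ τ)))
      = ∑ ρ, ∑ τ, ∑ σ, ∑ ι, mink ρ ρ * mink τ τ * mink σ σ * mink ι ι * (r ρ τ σ ι * d b ρ τ σ ι) :=
    csum4 fun x y z w => by ring
  have hD : (∑ ρ, ∑ τ, ∑ σ, ∑ ι, mink ρ ρ * mink τ τ * mink σ σ * mink ι ι * (d b ρ τ σ ι * r ρ τ σ ι))
      = ∑ ρ, ∑ τ, ∑ σ, ∑ ι, mink ρ ρ * mink τ τ * mink σ σ * mink ι ι * (r ρ τ σ ι * d b ρ τ σ ι) :=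
    csum4 fun x y z w => by ring
  rw [hA, hB, hC, hD]
  ring

end Div2

section Div3
variable {r : Fin 4 → Fin 4 → Fin 4 → Fin 4 → ℝ}
variable {d : Fin 4 → Fin 4 → Fin 4 → Fin 4 → Fin 4 → ℝ}

/-- Divergence of DB2 on the fourth slot (contracted with derivative slot) vanishes. -/
lemma div4 (hr1 : ∀ a b c m, r a b c m = - r b a c m)
    (hr3 : ∀ a b c m, r a b c m = r c m a b)
    (hd1 : ∀ ν a b c m, d ν a b c m = - d ν b a c m)
    (hd3 : ∀ ν a b c m, d ν a b c m = d ν c m a b)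
    (hBi : ∀ ν a b c m, d ν a b c m + d a b ν c m + d b ν a c m = 0)
    (hJ : ∀ l m b, (∑ x, mink x x * (d l x m x b - d m x l x b)) = 0)
    (x y z : Fin 4) :
    (∑ μ, mink μ μ * DB2 r d μ x y z μ) = 0 := by
  have h : ∀ μ : Fin 4, DB2 r d μ x y z μ = DB2 r d μ μ z x y := fun μ => by
    rw [DB2_sym3 r d hr3 hd3 μ x y z μ, DB2_sym1 r d μ z μ x y]
  rw [Finset.sum_congr rfl (fun μ _ => by rw [h μ])]
  exact div1 hr1 hd1 hd3 hBi hJ z x y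

/-- symmetrized Leibniz derivative -/
def DSS (r : Fin 4 → Fin 4 → Fin 4 → Fin 4 → ℝ)
    (d : Fin 4 → Fin 4 → Fin 4 → Fin 4 → Fin 4 → ℝ) (ν a b c m : Fin 4) : ℝ :=
  (1/6) * (DB2 r d ν a b c m + DB2 r d ν a c b m + DB2 r d ν b a c m
    + DB2 r d ν b c a m + DB2 r d ν c a b m + DB2 r d ν c b a m)

lemma div4DSS (hr1 : ∀ a b c m, r a b c m = - r b a c m)
    (hr3 : ∀ a b c m, r a b c m = r c m a b)
    (hd1 : ∀ ν a b c m, d ν a b c m = - d ν b a c m)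
    (hd3 : ∀ ν a b c m, d ν a b c m = d ν c m a b)
    (hBi : ∀ ν a b c m, d ν a b c m + d a b ν c m + d b ν a c m = 0)
    (hJ : ∀ l m b, (∑ x, mink x x * (d l x m x b - d m x l x b)) = 0)
    (a b c : Fin 4) :
    (∑ μ, mink μ μ * DSS r d μ a b c μ) = 0 := by
  have h : ∀ μ : Fin 4, mink μ μ * DSS r d μ a b c μ
      = (1/6) * (mink μ μ * DB2 r d μ a b c μ) + (1/6) * (mink μ μ * DB2 r d μ a c b μ)
        + (1/6) * (mink μ μ * DB2 r d μ b a c μ) + (1/6) * (mink μ μ * DB2 r d μ b c a μ)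
        + (1/6) * (mink μ μ * DB2 r d μ c a b μ) + (1/6) * (mink μ μ * DB2 r d μ c b a μ) := by
    intro μ; unfold DSS; ring
  rw [Finset.sum_congr rfl (fun μ _ => h μ)]
  rw [Finset.sum_add_distrib, Finset.sum_add_distrib, Finset.sum_add_distrib,
    Finset.sum_add_distrib, Finset.sum_add_distrib]
  have hp : ∀ x y z : Fin 4, (∑ μ, (1/6 : ℝ) * (mink μ μ * DB2 r d μ x y z μ)) = 0 := by
    intro x y z
    rw [(Finset.mul_sum Finset.univ (fun μ => mink μ μ * DB2 r d μ x y z μ) ((1:ℝ)/6)).symm]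
    rw [div4 hr1 hr3 hd1 hd3 hBi hJ x y z, mul_zero]
  rw [hp a b c, hp a c b, hp b a c, hp b c a, hp c a b, hp c b a]
  ring

/-- contraction of a symmetric tensor with a Killing-antisymmetric gradient vanishes -/
lemma killing_contract (S u : Fin 4 → Fin 4 → ℝ)
    (hS : ∀ x y, S x y = S y x)
    (hu : ∀ a b, mink b b * u a b + mink a a * u b a = 0) :
    (∑ x, ∑ y, mink y y * (S x y * u y x)) = 0 := by
  have hu' : ∀ x y, mink x x * u x y + mink y y * u y x = 0 := by
    intro x y
    have h1 := hu x y
    have h2 := mink_sq x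
    have h3 := mink_sq y
    linear_combination mink x x * mink y y * h1 + (- mink y y * u y x) * h2
      + (- mink x x * u x y) * h3
  have hswap : (∑ x, ∑ y, mink y y * (S x y * u y x))
      = ∑ x, ∑ y, mink x x * (S y x * u x y) := Finset.sum_comm
  have hzero : (∑ x, ∑ y, (mink x x * (S y x * u x y) + mink y y * (S x y * u y x))) = 0 := by
    refine Finset.sum_eq_zero fun x _ => Finset.sum_eq_zero fun y _ => ?_
    rw [hS y x]
    linear_combination S x y * hu' x y
  rw [sum_add2] at hzero
  linarith
end Div3
lemma pd_neg {f : (Fin 4 → ℝ) → ℝ} {p : Fin 4 → ℝ} (hf : DifferentiableAt ℝ f p) (ν : Fin 4) :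
    pd ν (fun q => -(f q)) p = - pd ν f p := by
  unfold pd; rw [fderiv_fun_neg]; simp

lemma pd_quadsum2 (ν : Fin 4) (p : Fin 4 → ℝ) (W : Fin 4 → Fin 4 → ℝ)
    (A B : Fin 4 → Fin 4 → (Fin 4 → ℝ) → ℝ)
    (hA : ∀ x y, DifferentiableAt ℝ (A x y) p) (hB : ∀ x y, DifferentiableAt ℝ (B x y) p) :
    pd ν (fun q => ∑ x, ∑ y, W x y * (A x y q * B x y q)) p
      = ∑ x, ∑ y, W x y * (pd ν (A x y) p * B x y p + A x y p * pd ν (B x y) p) := by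
  rw [pd_sum Finset.univ (fun x _ => DifferentiableAt.fun_sum
    (fun y _ => ((hA x y).fun_mul (hB x y)).const_mul _)) ν]
  refine Finset.sum_congr rfl fun x _ => ?_
  rw [pd_sum Finset.univ (fun y _ => ((hA x y).fun_mul (hB x y)).const_mul _) ν]
  refine Finset.sum_congr rfl fun y _ => ?_
  rw [pd_const_mul ((hA x y).fun_mul (hB x y)) _ ν, pd_mul (hA x y) (hB x y) ν]

lemma pd_quadsum3 (ν : Fin 4) (p : Fin 4 → ℝ) (W : Fin 4 → Fin 4 → Fin 4 → ℝ)
    (A B : Fin 4 → Fin 4 → Fin 4 → (Fin 4 → ℝ) → ℝ)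
    (hA : ∀ x y z, DifferentiableAt ℝ (A x y z) p) (hB : ∀ x y z, DifferentiableAt ℝ (B x y z) p) :
    pd ν (fun q => ∑ x, ∑ y, ∑ z, W x y z * (A x y z q * B x y z q)) p
      = ∑ x, ∑ y, ∑ z, W x y z * (pd ν (A x y z) p * B x y z p + A x y z p * pd ν (B x y z) p) := by
  rw [pd_sum Finset.univ (fun x _ => DifferentiableAt.fun_sum (fun y _ => DifferentiableAt.fun_sum
    (fun z _ => ((hA x y z).fun_mul (hB x y z)).const_mul _))) ν]
  refine Finset.sum_congr rfl fun x _ => ?_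
  rw [pd_sum Finset.univ (fun y _ => DifferentiableAt.fun_sum
    (fun z _ => ((hA x y z).fun_mul (hB x y z)).const_mul _)) ν]
  refine Finset.sum_congr rfl fun y _ => ?_
  rw [pd_sum Finset.univ (fun z _ => ((hA x y z).fun_mul (hB x y z)).const_mul _) ν]
  refine Finset.sum_congr rfl fun z _ => ?_
  rw [pd_const_mul ((hA x y z).fun_mul (hB x y z)) _ ν, pd_mul (hA x y z) (hB x y z) ν]

lemma pd_quadsum4 (ν : Fin 4) (p : Fin 4 → ℝ) (W : Fin 4 → Fin 4 → Fin 4 → Fin 4 → ℝ)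
    (A B : Fin 4 → Fin 4 → Fin 4 → Fin 4 → (Fin 4 → ℝ) → ℝ)
    (hA : ∀ x y z w, DifferentiableAt ℝ (A x y z w) p)
    (hB : ∀ x y z w, DifferentiableAt ℝ (B x y z w) p) :
    pd ν (fun q => ∑ x, ∑ y, ∑ z, ∑ w, W x y z w * (A x y z w q * B x y z w q)) p
      = ∑ x, ∑ y, ∑ z, ∑ w, W x y z w *
        (pd ν (A x y z w) p * B x y z w p + A x y z w p * pd ν (B x y z w) p) := by
  rw [pd_sum Finset.univ (fun x _ => DifferentiableAt.fun_sum (fun y _ => DifferentiableAt.fun_sum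
    (fun z _ => DifferentiableAt.fun_sum (fun w _ => ((hA x y z w).fun_mul (hB x y z w)).const_mul _)))) ν]
  refine Finset.sum_congr rfl fun x _ => ?_
  rw [pd_sum Finset.univ (fun y _ => DifferentiableAt.fun_sum (fun z _ => DifferentiableAt.fun_sum
    (fun w _ => ((hA x y z w).fun_mul (hB x y z w)).const_mul _))) ν]
  refine Finset.sum_congr rfl fun y _ => ?_
  rw [pd_sum Finset.univ (fun z _ => DifferentiableAt.fun_sum
    (fun w _ => ((hA x y z w).fun_mul (hB x y z w)).const_mul _)) ν]
  refine Finset.sum_congr rfl fun z _ => ?_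
  rw [pd_sum Finset.univ (fun w _ => ((hA x y z w).fun_mul (hB x y z w)).const_mul _) ν]
  refine Finset.sum_congr rfl fun w _ => ?_
  rw [pd_const_mul ((hA x y z w).fun_mul (hB x y z w)) _ ν, pd_mul (hA x y z w) (hB x y z w) ν]

section Calc
variable {R : (Fin 4 → ℝ) → Fin 4 → Fin 4 → Fin 4 → Fin 4 → ℝ} {p : Fin 4 → ℝ}

lemma diffB2 (hRd : ∀ a b c m, DifferentiableAt ℝ (fun q => R q a b c m) p) (a b c m : Fin 4) :
    DifferentiableAt ℝ (fun q => B2 (R q) a b c m) p := by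
  unfold B2
  apply DifferentiableAt.add
  apply DifferentiableAt.sub
  apply DifferentiableAt.sub
  apply DifferentiableAt.add
  · exact DifferentiableAt.fun_sum fun ρ _ => DifferentiableAt.fun_sum fun σ _ =>
      (((hRd a ρ c σ).fun_mul (hRd b ρ m σ)).const_mul _)
  · exact DifferentiableAt.fun_sum fun ρ _ => DifferentiableAt.fun_sum fun σ _ =>
      (((hRd a ρ m σ).fun_mul (hRd b ρ c σ)).const_mul _)
  · exact (DifferentiableAt.fun_sum fun ρ _ => DifferentiableAt.fun_sum fun τ _ =>
      DifferentiableAt.fun_sum fun σ _ =>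
      (((hRd ρ τ c σ).fun_mul (hRd ρ τ m σ)).const_mul _)).const_mul _
  · exact (DifferentiableAt.fun_sum fun ρ _ => DifferentiableAt.fun_sum fun σ _ =>
      DifferentiableAt.fun_sum fun τ _ =>
      (((hRd a ρ σ τ).fun_mul (hRd b ρ σ τ)).const_mul _)).const_mul _
  · exact (DifferentiableAt.fun_sum fun ρ _ => DifferentiableAt.fun_sum fun τ _ =>
      DifferentiableAt.fun_sum fun σ _ => DifferentiableAt.fun_sum fun ι _ =>
      (((hRd ρ τ σ ι).fun_mul (hRd ρ τ σ ι)).const_mul _)).const_mul _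

lemma pdB2 (hRd : ∀ a b c m, DifferentiableAt ℝ (fun q => R q a b c m) p) (ν a b c m : Fin 4) :
    pd ν (fun q => B2 (R q) a b c m) p
      = DB2 (R p) (fun ν' w x y z => pd ν' (fun q => R q w x y z) p) ν a b c m := by
  have d1 : DifferentiableAt ℝ (fun q => ∑ ρ, ∑ σ, mink ρ ρ * mink σ σ * (R q a ρ c σ * R q b ρ m σ)) p :=
    DifferentiableAt.fun_sum fun ρ _ => DifferentiableAt.fun_sum fun σ _ =>
      (((hRd a ρ c σ).fun_mul (hRd b ρ m σ)).const_mul _)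
  have d2 : DifferentiableAt ℝ (fun q => ∑ ρ, ∑ σ, mink ρ ρ * mink σ σ * (R q a ρ m σ * R q b ρ c σ)) p :=
    DifferentiableAt.fun_sum fun ρ _ => DifferentiableAt.fun_sum fun σ _ =>
      (((hRd a ρ m σ).fun_mul (hRd b ρ c σ)).const_mul _)
  have d3 : DifferentiableAt ℝ (fun q => 1/2 * mink a b * ∑ ρ, ∑ τ, ∑ σ,
      mink ρ ρ * mink τ τ * mink σ σ * (R q ρ τ c σ * R q ρ τ m σ)) p :=
    (DifferentiableAt.fun_sum fun ρ _ => DifferentiableAt.fun_sum fun τ _ =>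
      DifferentiableAt.fun_sum fun σ _ =>
      (((hRd ρ τ c σ).fun_mul (hRd ρ τ m σ)).const_mul _)).const_mul _
  have d4 : DifferentiableAt ℝ (fun q => 1/2 * mink c m * ∑ ρ, ∑ σ, ∑ τ,
      mink ρ ρ * mink σ σ * mink τ τ * (R q a ρ σ τ * R q b ρ σ τ)) p :=
    (DifferentiableAt.fun_sum fun ρ _ => DifferentiableAt.fun_sum fun σ _ =>
      DifferentiableAt.fun_sum fun τ _ =>
      (((hRd a ρ σ τ).fun_mul (hRd b ρ σ τ)).const_mul _)).const_mul _
  have d5 : DifferentiableAt ℝ (fun q => 1/8 * mink a b * mink c m * ∑ ρ, ∑ τ, ∑ σ, ∑ ι,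
      mink ρ ρ * mink τ τ * mink σ σ * mink ι ι * (R q ρ τ σ ι * R q ρ τ σ ι)) p :=
    (DifferentiableAt.fun_sum fun ρ _ => DifferentiableAt.fun_sum fun τ _ =>
      DifferentiableAt.fun_sum fun σ _ => DifferentiableAt.fun_sum fun ι _ =>
      (((hRd ρ τ σ ι).fun_mul (hRd ρ τ σ ι)).const_mul _)).const_mul _
  unfold B2 DB2
  rw [pd_add (((d1.fun_add d2).fun_sub d3).fun_sub d4) d5 ν]
  rw [pd_sub ((d1.fun_add d2).fun_sub d3) d4 ν]
  rw [pd_sub (d1.fun_add d2) d3 ν]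
  rw [pd_add d1 d2 ν]
  rw [pd_quadsum2 ν p (fun ρ σ => mink ρ ρ * mink σ σ)
    (fun ρ σ => fun q => R q a ρ c σ) (fun ρ σ => fun q => R q b ρ m σ)
    (fun x y => hRd a x c y) (fun x y => hRd b x m y)]
  rw [pd_quadsum2 ν p (fun ρ σ => mink ρ ρ * mink σ σ)
    (fun ρ σ => fun q => R q a ρ m σ) (fun ρ σ => fun q => R q b ρ c σ)
    (fun x y => hRd a x m y) (fun x y => hRd b x c y)]
  rw [pd_const_mul (f := fun q => ∑ ρ, ∑ τ, ∑ σ,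
      mink ρ ρ * mink τ τ * mink σ σ * (R q ρ τ c σ * R q ρ τ m σ))
    (DifferentiableAt.fun_sum fun ρ _ => DifferentiableAt.fun_sum fun τ _ =>
      DifferentiableAt.fun_sum fun σ _ =>
      (((hRd ρ τ c σ).fun_mul (hRd ρ τ m σ)).const_mul _)) (1/2 * mink a b) ν]
  rw [pd_const_mul (f := fun q => ∑ ρ, ∑ σ, ∑ τ,
      mink ρ ρ * mink σ σ * mink τ τ * (R q a ρ σ τ * R q b ρ σ τ))
    (DifferentiableAt.fun_sum fun ρ _ => DifferentiableAt.fun_sum fun σ _ =>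
      DifferentiableAt.fun_sum fun τ _ =>
      (((hRd a ρ σ τ).fun_mul (hRd b ρ σ τ)).const_mul _)) (1/2 * mink c m) ν]
  rw [pd_const_mul (f := fun q => ∑ ρ, ∑ τ, ∑ σ, ∑ ι,
      mink ρ ρ * mink τ τ * mink σ σ * mink ι ι * (R q ρ τ σ ι * R q ρ τ σ ι))
    (DifferentiableAt.fun_sum fun ρ _ => DifferentiableAt.fun_sum fun τ _ =>
      DifferentiableAt.fun_sum fun σ _ => DifferentiableAt.fun_sum fun ι _ =>
      (((hRd ρ τ σ ι).fun_mul (hRd ρ τ σ ι)).const_mul _)) (1/8 * mink a b * mink c m) ν]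
  rw [pd_quadsum3 ν p (fun ρ τ σ => mink ρ ρ * mink τ τ * mink σ σ)
    (fun ρ τ σ => fun q => R q ρ τ c σ) (fun ρ τ σ => fun q => R q ρ τ m σ)
    (fun x y z => hRd x y c z) (fun x y z => hRd x y m z)]
  rw [pd_quadsum3 ν p (fun ρ σ τ => mink ρ ρ * mink σ σ * mink τ τ)
    (fun ρ σ τ => fun q => R q a ρ σ τ) (fun ρ σ τ => fun q => R q b ρ σ τ)
    (fun x y z => hRd a x y z) (fun x y z => hRd b x y z)]
  rw [pd_quadsum4 ν p (fun ρ τ σ ι => mink ρ ρ * mink τ τ * mink σ σ * mink ι ι)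
    (fun ρ τ σ ι => fun q => R q ρ τ σ ι) (fun ρ τ σ ι => fun q => R q ρ τ σ ι)
    (fun x y z w => hRd x y z w) (fun x y z w => hRd x y z w)]

end Calc
section Calc2
variable {R : (Fin 4 → ℝ) → Fin 4 → Fin 4 → Fin 4 → Fin 4 → ℝ} {p : Fin 4 → ℝ}

lemma diffSS (hRd : ∀ a b c m, DifferentiableAt ℝ (fun q => R q a b c m) p) (a b c m : Fin 4) :
    DifferentiableAt ℝ (fun q => SS (R q) a b c m) p := by
  have D := diffB2 hRd
  unfold SS
  exact ((((((D a b c m).add (D a c b m)).add (D b a c m)).add (D b c a m)).add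
    (D c a b m)).add (D c b a m)).const_mul _

lemma pdSS (hRd : ∀ a b c m, DifferentiableAt ℝ (fun q => R q a b c m) p) (ν a b c m : Fin 4) :
    pd ν (fun q => SS (R q) a b c m) p
      = DSS (R p) (fun ν' w x y z => pd ν' (fun q => R q w x y z) p) ν a b c m := by
  have D := diffB2 hRd
  unfold SS DSS
  rw [pd_const_mul ((((((D a b c m).fun_add (D a c b m)).fun_add (D b a c m)).fun_add (D b c a m)).fun_add
    (D c a b m)).fun_add (D c b a m)) _ ν]
  rw [pd_add (((((D a b c m).fun_add (D a c b m)).fun_add (D b a c m)).fun_add (D b c a m)).fun_add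
    (D c a b m)) (D c b a m) ν]
  rw [pd_add ((((D a b c m).fun_add (D a c b m)).fun_add (D b a c m)).fun_add (D b c a m)) (D c a b m) ν]
  rw [pd_add (((D a b c m).fun_add (D a c b m)).fun_add (D b a c m)) (D b c a m) ν]
  rw [pd_add ((D a b c m).fun_add (D a c b m)) (D b a c m) ν]
  rw [pd_add (D a b c m) (D a c b m) ν]
  rw [pdB2 hRd ν a b c m, pdB2 hRd ν a c b m, pdB2 hRd ν b a c m, pdB2 hRd ν b c a m,
    pdB2 hRd ν c a b m, pdB2 hRd ν c b a m]

lemma belCurrent_eq (ξ₁ ξ₂ ξ₃ : (Fin 4 → ℝ) → Fin 4 → ℝ) (q : Fin 4 → ℝ) (μ : Fin 4) :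
    belCurrent R ξ₁ ξ₂ ξ₃ q μ
      = ∑ α, ∑ β, ∑ lam, SS (R q) α β lam μ * ξ₁ q α * ξ₂ q β * ξ₃ q lam := by
  unfold belCurrent
  refine csum3 fun α β lam => ?_
  rw [permSum_eq (fun x y z => Bel (R q) x y z μ) α β lam]
  simp only [Bel_eq_B2]
  unfold SS
  rfl

lemma pd_belCurrent (hRd : ∀ a b c m, DifferentiableAt ℝ (fun q => R q a b c m) p)
    {ξ₁ ξ₂ ξ₃ : (Fin 4 → ℝ) → Fin 4 → ℝ}
    (hξ1 : ∀ α, DifferentiableAt ℝ (fun q => ξ₁ q α) p)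
    (hξ2 : ∀ α, DifferentiableAt ℝ (fun q => ξ₂ q α) p)
    (hξ3 : ∀ α, DifferentiableAt ℝ (fun q => ξ₃ q α) p) (μ : Fin 4) :
    pd μ (fun q => ∑ α, ∑ β, ∑ lam, SS (R q) α β lam μ * ξ₁ q α * ξ₂ q β * ξ₃ q lam) p
      = ∑ α, ∑ β, ∑ lam,
          (DSS (R p) (fun ν' w x y z => pd ν' (fun q => R q w x y z) p) μ α β lam μ
              * ξ₁ p α * ξ₂ p β * ξ₃ p lam
          + SS (R p) α β lam μ * pd μ (fun q => ξ₁ q α) p * ξ₂ p β * ξ₃ p lam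
          + SS (R p) α β lam μ * ξ₁ p α * pd μ (fun q => ξ₂ q β) p * ξ₃ p lam
          + SS (R p) α β lam μ * ξ₁ p α * ξ₂ p β * pd μ (fun q => ξ₃ q lam) p) := by
  have DS := diffSS hRd
  rw [pd_sum Finset.univ (fun α _ => DifferentiableAt.fun_sum fun β _ =>
    DifferentiableAt.fun_sum fun lam _ =>
      (((DS α β lam μ).fun_mul (hξ1 α)).fun_mul (hξ2 β)).fun_mul (hξ3 lam)) μ]
  refine Finset.sum_congr rfl fun α _ => ?_
  rw [pd_sum Finset.univ (fun β _ => DifferentiableAt.fun_sum fun lam _ =>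
      (((DS α β lam μ).fun_mul (hξ1 α)).fun_mul (hξ2 β)).fun_mul (hξ3 lam)) μ]
  refine Finset.sum_congr rfl fun β _ => ?_
  rw [pd_sum Finset.univ (fun lam _ =>
      (((DS α β lam μ).fun_mul (hξ1 α)).fun_mul (hξ2 β)).fun_mul (hξ3 lam)) μ]
  refine Finset.sum_congr rfl fun lam _ => ?_
  rw [pd_mul (((DS α β lam μ).fun_mul (hξ1 α)).fun_mul (hξ2 β)) (hξ3 lam) μ]
  rw [pd_mul ((DS α β lam μ).fun_mul (hξ1 α)) (hξ2 β) μ]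
  rw [pd_mul (DS α β lam μ) (hξ1 α) μ]
  rw [pdSS hRd μ α β lam μ]
  ring

end Calc2


/-- on Minkowski ℝ⁴, if a smooth (0,4)-tensor field `R` with the
Riemann symmetries satisfies the second Bianchi identity and its matter current
`J_{λμβ} = ∂_λ Ric_{μβ} − ∂_μ Ric_{λβ}` vanishes identically
(`Ric_{μβ} = η^{αλ} R_{αμλβ}`), then for any three Killing vector fields
`ξ₁, ξ₂, ξ₃` of `η` the Bel current `j_μ = B_{(αβλ)μ} ξ₁^α ξ₂^β ξ₃^λ` built from
the Bel tensor `B` of `R` is conserved: `∂^μ j_μ = 0` everywhere. -/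
theorem bel_current_conserved
    (R : (Fin 4 → ℝ) → Fin 4 → Fin 4 → Fin 4 → Fin 4 → ℝ)
    (hRsmooth : ∀ α β lam μ, ContDiff ℝ (⊤ : ℕ∞) fun p => R p α β lam μ)
    (hRsym : ∀ p, RiemannSym (R p))
    (hBianchi : SecondBianchi R)
    (hJ : ∀ p lam μ β, matJ R p lam μ β = 0)
    (ξ₁ ξ₂ ξ₃ : (Fin 4 → ℝ) → Fin 4 → ℝ)
    (hξ₁smooth : ∀ α, ContDiff ℝ (⊤ : ℕ∞) fun p => ξ₁ p α)
    (hξ₂smooth : ∀ α, ContDiff ℝ (⊤ : ℕ∞) fun p => ξ₂ p α)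
    (hξ₃smooth : ∀ α, ContDiff ℝ (⊤ : ℕ∞) fun p => ξ₃ p α)
    (hK₁ : IsKilling ξ₁) (hK₂ : IsKilling ξ₂) (hK₃ : IsKilling ξ₃) :
    ∀ p, (∑ μ, ∑ ν, mink μ ν * pd ν (fun q => belCurrent R ξ₁ ξ₂ ξ₃ q μ) p) = 0 := by
  intro p
  have hRd : ∀ a b c m, DifferentiableAt ℝ (fun q => R q a b c m) p :=
    fun a b c m => ((hRsmooth a b c m).differentiable (by simp)).differentiableAt
  have hξd1 : ∀ α, DifferentiableAt ℝ (fun q => ξ₁ q α) p :=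
    fun α => ((hξ₁smooth α).differentiable (by simp)).differentiableAt
  have hξd2 : ∀ α, DifferentiableAt ℝ (fun q => ξ₂ q α) p :=
    fun α => ((hξ₂smooth α).differentiable (by simp)).differentiableAt
  have hξd3 : ∀ α, DifferentiableAt ℝ (fun q => ξ₃ q α) p :=
    fun α => ((hξ₃smooth α).differentiable (by simp)).differentiableAt
  have hr1 : ∀ a b c m, R p a b c m = - R p b a c m := (hRsym p).1
  have hr3 : ∀ a b c m, R p a b c m = R p c m a b := (hRsym p).2.2.1
  have hd1 : ∀ ν a b c m, pd ν (fun q => R q a b c m) p = - pd ν (fun q => R q b a c m) p := by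
    intro ν a b c m
    have hfe : (fun q => R q a b c m) = fun q => -(R q b a c m) :=
      funext fun q => (hRsym q).1 a b c m
    rw [hfe, pd_neg (hRd b a c m) ν]
  have hd3 : ∀ ν a b c m, pd ν (fun q => R q a b c m) p = pd ν (fun q => R q c m a b) p := by
    intro ν a b c m
    have hfe : (fun q => R q a b c m) = fun q => R q c m a b :=
      funext fun q => (hRsym q).2.2.1 a b c m
    rw [hfe]
  have hBi : ∀ ν a b c m, pd ν (fun q => R q a b c m) p + pd a (fun q => R q b ν c m) p
      + pd b (fun q => R q ν a c m) p = 0 := by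
    intro ν a b c m
    have h := hBianchi p ν a b c m
    have e1 := hd1 ν b a c m
    have e2 := hd1 a ν b c m
    have e3 := hd1 b a ν c m
    linarith
  have hric : ∀ (l y z : Fin 4), pd l (fun q => ricci R q y z) p
      = ∑ x, mink x x * pd l (fun q => R q x y x z) p := by
    intro l y z
    have hfe : (fun q => ricci R q y z) = fun q => ∑ α, ∑ lam, mink α lam * R q α y lam z :=
      funext fun q => rfl
    rw [hfe]
    rw [pd_sum Finset.univ (fun α _ => DifferentiableAt.fun_sum fun lam _ =>
      (hRd α y lam z).const_mul _) l]
    refine Finset.sum_congr rfl fun α _ => ?_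
    rw [pd_sum Finset.univ (fun lam _ => (hRd α y lam z).const_mul _) l]
    rw [Finset.sum_congr rfl (fun lam (_ : lam ∈ Finset.univ) =>
      pd_const_mul (hRd α y lam z) (mink α lam) l)]
    exact mink_contract α (fun lam => pd l (fun q => R q α y lam z) p)
  have hJ' : ∀ l m b, (∑ x, mink x x *
      (pd l (fun q => R q x m x b) p - pd m (fun q => R q x l x b) p)) = 0 := by
    intro l m b
    have h := hJ p l m b
    unfold matJ at h
    rw [hric l m b, hric m l b] at h
    have hmerge : (∑ x, mink x x *
        (pd l (fun q => R q x m x b) p - pd m (fun q => R q x l x b) p))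
        = (∑ x, mink x x * pd l (fun q => R q x m x b) p)
          - (∑ x, mink x x * pd m (fun q => R q x l x b) p) := by
      rw [← Finset.sum_sub_distrib]
      exact Finset.sum_congr rfl fun x _ => by ring
    rw [hmerge]
    linarith
  have hu : ∀ (ξ : (Fin 4 → ℝ) → Fin 4 → ℝ), IsKilling ξ →
      (∀ α, DifferentiableAt ℝ (fun q => ξ q α) p) →
      ∀ a b, mink b b * pd a (fun q => ξ q b) p + mink a a * pd b (fun q => ξ q a) p = 0 := by
    intro ξ hK hξd a b
    have hlow : ∀ c : Fin 4, (fun q => lowerIdx ξ q c) = fun q => mink c c * ξ q c := by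
      intro c; funext q; exact mink_contract c (fun ρ => ξ q ρ)
    have h := hK p a b
    rw [hlow a, hlow b] at h
    rw [pd_const_mul (hξd b) (mink b b) a, pd_const_mul (hξd a) (mink a a) b] at h
    linarith
  -- collapse the ν-sum
  rw [Finset.sum_congr rfl (fun μ (_ : μ ∈ Finset.univ) =>
    mink_contract μ (fun ν => pd ν (fun q => belCurrent R ξ₁ ξ₂ ξ₃ q μ) p))]
  -- rewrite belCurrent and differentiate
  have hbc : ∀ μ : Fin 4, (fun q => belCurrent R ξ₁ ξ₂ ξ₃ q μ)
      = fun q => ∑ α, ∑ β, ∑ lam, SS (R q) α β lam μ * ξ₁ q α * ξ₂ q β * ξ₃ q lam :=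
    fun μ => funext fun q => belCurrent_eq ξ₁ ξ₂ ξ₃ q μ
  rw [Finset.sum_congr rfl (fun μ (_ : μ ∈ Finset.univ) => by
    rw [hbc μ, pd_belCurrent hRd hξd1 hξd2 hξd3 μ])]
  -- split into four pieces
  have split : ∀ μ : Fin 4, mink μ μ * (∑ α, ∑ β, ∑ lam,
      (DSS (R p) (fun ν' w x y z => pd ν' (fun q => R q w x y z) p) μ α β lam μ
          * ξ₁ p α * ξ₂ p β * ξ₃ p lam
        + SS (R p) α β lam μ * pd μ (fun q => ξ₁ q α) p * ξ₂ p β * ξ₃ p lam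
        + SS (R p) α β lam μ * ξ₁ p α * pd μ (fun q => ξ₂ q β) p * ξ₃ p lam
        + SS (R p) α β lam μ * ξ₁ p α * ξ₂ p β * pd μ (fun q => ξ₃ q lam) p))
      = (∑ α, ∑ β, ∑ lam, mink μ μ *
          (DSS (R p) (fun ν' w x y z => pd ν' (fun q => R q w x y z) p) μ α β lam μ
            * ξ₁ p α * ξ₂ p β * ξ₃ p lam))
        + (∑ α, ∑ β, ∑ lam, mink μ μ *
          (SS (R p) α β lam μ * pd μ (fun q => ξ₁ q α) p * ξ₂ p β * ξ₃ p lam))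
        + (∑ α, ∑ β, ∑ lam, mink μ μ *
          (SS (R p) α β lam μ * ξ₁ p α * pd μ (fun q => ξ₂ q β) p * ξ₃ p lam))
        + (∑ α, ∑ β, ∑ lam, mink μ μ *
          (SS (R p) α β lam μ * ξ₁ p α * ξ₂ p β * pd μ (fun q => ξ₃ q lam) p)) := by
    intro μ
    simp only [Finset.mul_sum]
    rw [csum3 (g := fun α β lam =>
        mink μ μ * (DSS (R p) (fun ν' w x y z => pd ν' (fun q => R q w x y z) p) μ α β lam μ
          * ξ₁ p α * ξ₂ p β * ξ₃ p lam)
      + mink μ μ * (SS (R p) α β lam μ * pd μ (fun q => ξ₁ q α) p * ξ₂ p β * ξ₃ p lam)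
      + mink μ μ * (SS (R p) α β lam μ * ξ₁ p α * pd μ (fun q => ξ₂ q β) p * ξ₃ p lam)
      + mink μ μ * (SS (R p) α β lam μ * ξ₁ p α * ξ₂ p β * pd μ (fun q => ξ₃ q lam) p))
      (fun x y z => by ring)]
    rw [sum_add3, sum_add3, sum_add3]
  rw [Finset.sum_congr rfl (fun μ (_ : μ ∈ Finset.univ) => split μ)]
  rw [Finset.sum_add_distrib, Finset.sum_add_distrib, Finset.sum_add_distrib]
  -- piece A
  have GA : (∑ μ, ∑ α, ∑ β, ∑ lam, mink μ μ *
      (DSS (R p) (fun ν' w x y z => pd ν' (fun q => R q w x y z) p) μ α β lam μ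
        * ξ₁ p α * ξ₂ p β * ξ₃ p lam)) = 0 := by
    rw [sum4_last]
    refine Finset.sum_eq_zero fun α _ => Finset.sum_eq_zero fun β _ =>
      Finset.sum_eq_zero fun lam _ => ?_
    have h1 : (∑ μ, mink μ μ *
        (DSS (R p) (fun ν' w x y z => pd ν' (fun q => R q w x y z) p) μ α β lam μ
          * ξ₁ p α * ξ₂ p β * ξ₃ p lam))
        = (∑ μ, mink μ μ *
            DSS (R p) (fun ν' w x y z => pd ν' (fun q => R q w x y z) p) μ α β lam μ)
          * (ξ₁ p α * ξ₂ p β * ξ₃ p lam) := by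
      rw [Finset.sum_mul]
      exact Finset.sum_congr rfl fun μ _ => by ring
    rw [h1, div4DSS hr1 hr3 hd1 hd3 hBi hJ' α β lam, zero_mul]
  -- piece B1
  have GB1 : (∑ μ, ∑ α, ∑ β, ∑ lam, mink μ μ *
      (SS (R p) α β lam μ * pd μ (fun q => ξ₁ q α) p * ξ₂ p β * ξ₃ p lam)) = 0 := by
    rw [sum4_last]
    rw [sum3_perm (fun α β lam => ∑ μ, mink μ μ *
      (SS (R p) α β lam μ * pd μ (fun q => ξ₁ q α) p * ξ₂ p β * ξ₃ p lam))]
    refine Finset.sum_eq_zero fun β _ => Finset.sum_eq_zero fun lam _ => ?_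
    have h1 : ∀ α : Fin 4, (∑ μ, mink μ μ *
        (SS (R p) α β lam μ * pd μ (fun q => ξ₁ q α) p * ξ₂ p β * ξ₃ p lam))
        = (∑ μ, mink μ μ * (SS (R p) α β lam μ * pd μ (fun q => ξ₁ q α) p))
          * (ξ₂ p β * ξ₃ p lam) := by
      intro α
      rw [Finset.sum_mul]
      exact Finset.sum_congr rfl fun μ _ => by ring
    rw [Finset.sum_congr rfl (fun α (_ : α ∈ Finset.univ) => h1 α), ← Finset.sum_mul]
    rw [killing_contract (fun x y => SS (R p) x β lam y)
      (fun a b => pd a (fun q => ξ₁ q b) p)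
      (fun x y => SS_am (R p) hr3 x β lam y) (hu ξ₁ hK₁ hξd1), zero_mul]
  -- piece B2
  have GB2 : (∑ μ, ∑ α, ∑ β, ∑ lam, mink μ μ *
      (SS (R p) α β lam μ * ξ₁ p α * pd μ (fun q => ξ₂ q β) p * ξ₃ p lam)) = 0 := by
    rw [sum4_last]
    rw [Finset.sum_congr rfl (fun α (_ : α ∈ Finset.univ) =>
      (Finset.sum_comm : (∑ β : Fin 4, ∑ lam : Fin 4, ∑ μ : Fin 4, mink μ μ *
        (SS (R p) α β lam μ * ξ₁ p α * pd μ (fun q => ξ₂ q β) p * ξ₃ p lam))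
        = ∑ lam : Fin 4, ∑ β : Fin 4, ∑ μ : Fin 4, mink μ μ *
        (SS (R p) α β lam μ * ξ₁ p α * pd μ (fun q => ξ₂ q β) p * ξ₃ p lam)))]
    refine Finset.sum_eq_zero fun α _ => Finset.sum_eq_zero fun lam _ => ?_
    have h1 : ∀ β : Fin 4, (∑ μ, mink μ μ *
        (SS (R p) α β lam μ * ξ₁ p α * pd μ (fun q => ξ₂ q β) p * ξ₃ p lam))
        = (∑ μ, mink μ μ * (SS (R p) α β lam μ * pd μ (fun q => ξ₂ q β) p))
          * (ξ₁ p α * ξ₃ p lam) := by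
      intro β
      rw [Finset.sum_mul]
      exact Finset.sum_congr rfl fun μ _ => by ring
    rw [Finset.sum_congr rfl (fun β (_ : β ∈ Finset.univ) => h1 β), ← Finset.sum_mul]
    rw [killing_contract (fun x y => SS (R p) α x lam y)
      (fun a b => pd a (fun q => ξ₂ q b) p)
      (fun x y => SS_bm (R p) hr3 α x lam y) (hu ξ₂ hK₂ hξd2), zero_mul]
  -- piece B3
  have GB3 : (∑ μ, ∑ α, ∑ β, ∑ lam, mink μ μ *
      (SS (R p) α β lam μ * ξ₁ p α * ξ₂ p β * pd μ (fun q => ξ₃ q lam) p)) = 0 := by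
    rw [sum4_last]
    refine Finset.sum_eq_zero fun α _ => Finset.sum_eq_zero fun β _ => ?_
    have h1 : ∀ lam : Fin 4, (∑ μ, mink μ μ *
        (SS (R p) α β lam μ * ξ₁ p α * ξ₂ p β * pd μ (fun q => ξ₃ q lam) p))
        = (∑ μ, mink μ μ * (SS (R p) α β lam μ * pd μ (fun q => ξ₃ q lam) p))
          * (ξ₁ p α * ξ₂ p β) := by
      intro lam
      rw [Finset.sum_mul]
      exact Finset.sum_congr rfl fun μ _ => by ring
    rw [Finset.sum_congr rfl (fun lam (_ : lam ∈ Finset.univ) => h1 lam), ← Finset.sum_mul]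
    rw [killing_contract (fun x y => SS (R p) α β x y)
      (fun a b => pd a (fun q => ξ₃ q b) p)
      (fun x y => SS_cm (R p) hr3 α β x y) (hu ξ₃ hK₃ hξd3), zero_mul]
  rw [GA, GB1, GB2, GB3]
  ring
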